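/- Let C and D be reflexive digraph cycles with D non-contractible, let φ ∈ Hom(C,D), and let P = c_a … c_b be a cutback of C under φ. Then there is a path of up edges in Hom(C,D) from φ to the homomorphism φ' obtained from φ by setting φ'(c_i) = φ(c_a) for all vertices c_i of P (and φ' = φ elsewhere). -/

import Mathlib

open scoped Classical

namespace Recon

/-- Orientation letters for edges of a digraph cycle: `+`, `-`, `*`. -/
inductive Orient : Type
  | plus
  | minus
  | star
deriving DecidableEq

/-- A forward arc is allowed along an edge with this orientation letter. -/
def Orient.fwd : Orient → Prop
  | Orient.plus => True
  | Orient.minus => False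
  | Orient.star => True

/-- A backward arc is allowed along an edge with this orientation letter. -/
def Orient.bwd : Orient → Prop
  | Orient.plus => False
  | Orient.minus => True
  | Orient.star => True

/-- The arc relation of the reflexive digraph cycle on `ZMod m` whose orientation
string is `f`, where `f c` is the orientation of the edge from `c` to `c + 1`. -/
def cycRel {m : ℕ} (f : ZMod m → Orient) (u v : ZMod m) : Prop :=
  u = v ∨ (v = u + 1 ∧ (f u).fwd) ∨ (u = v + 1 ∧ (f v).bwd)

/-- `φ` is a digraph homomorphism. -/
def IsHom {α β : Type*} (rG : α → α → Prop) (rH : β → β → Prop) (φ : α → β) : Prop :=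
  ∀ u v, rG u v → rH (φ u) (φ v)

/-- The arc relation of the Hom-graph `Hom(G,H)`. -/
def HomArc {α β : Type*} (rG : α → α → Prop) (rH : β → β → Prop) (φ ψ : α → β) : Prop :=
  ∀ u v, rG u v → rH (φ u) (ψ v)

/-- `φψ` is an edge of the Hom-graph. -/
def HomEdge {α β : Type*} (rG : α → α → Prop) (rH : β → β → Prop) (φ ψ : α → β) : Prop :=
  HomArc rG rH φ ψ ∨ HomArc rG rH ψ φ

/-- The contribution of the edge `c (c+1)` of `C` to the increase of `φ`:
`1` if increasing, `-1` if decreasing, `0` if stationary. -/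
def edgeVal {m n : ℕ} (φ : ZMod m → ZMod n) (c : ZMod m) : ℤ :=
  if φ (c + 1) = φ c + 1 then 1 else if φ (c + 1) = φ c - 1 then -1 else 0

/-- The increase of a map between cycles: #increasing − #decreasing edges. -/
def increase {m n : ℕ} (φ : ZMod m → ZMod n) : ℤ :=
  ∑ j ∈ Finset.range m, edgeVal φ ((j : ℕ) : ZMod m)

/-- The increase of the subpath `c_a … c_{a+L}`. -/
def partialInc {m n : ℕ} (φ : ZMod m → ZMod n) (a : ZMod m) (L : ℕ) : ℤ :=
  ∑ j ∈ Finset.range L, edgeVal φ (a + ((j : ℕ) : ZMod m))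

/-- `φ` has wind `w`, i.e. its increase is `w * n`. -/
def HasWind {m n : ℕ} (φ : ZMod m → ZMod n) (w : ℤ) : Prop :=
  increase φ = w * (n : ℤ)

/-- A reflexive digraph cycle is non-contractible if it has length at least 4
or is a directed 3-cycle. -/
def NonContractible {n : ℕ} (f : ZMod n → Orient) : Prop :=
  4 ≤ n ∨ (n = 3 ∧ ((∀ i, f i = Orient.plus) ∨ (∀ i, f i = Orient.minus)))

/-- `φ` is increasing: every edge increasing or stationary, not all stationary. -/
def IncMap {m n : ℕ} (φ : ZMod m → ZMod n) : Prop :=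
  (∀ c, φ (c + 1) = φ c + 1 ∨ φ (c + 1) = φ c) ∧ ∃ c, φ (c + 1) = φ c + 1

/-- `φ` is decreasing: every edge decreasing. -/
def DecMap {m n : ℕ} (φ : ZMod m → ZMod n) : Prop :=
  ∀ c, φ (c + 1) = φ c - 1

/-- `φ` is monotone: increasing or decreasing. -/
def MonMap {m n : ℕ} (φ : ZMod m → ZMod n) : Prop :=
  IncMap φ ∨ DecMap φ

/-- `φ` is monotone in the weak sense where constant maps also count. -/
def MonOrConst {m n : ℕ} (φ : ZMod m → ZMod n) : Prop :=
  (∀ c, φ (c + 1) = φ c + 1 ∨ φ (c + 1) = φ c) ∨ DecMap φ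

/-- `Y ≤* X`: `Y` is a `*`-substring of `X`, via a strictly increasing selection
function `α` with `Y i = X (α i)` unless `Y i = *`. -/
def StarSub {p q : ℕ} (Y : Fin p → Orient) (X : Fin q → Orient) : Prop :=
  ∃ α : Fin p → Fin q, StrictMono α ∧ ∀ i, Y i = X (α i) ∨ Y i = Orient.star

/-- The orientation string of the (pointed) cycle `f`. -/
def cycStr {m : ℕ} (f : ZMod m → Orient) : Fin m → Orient :=
  fun j => f ((j : ℕ) : ZMod m)

/-- The orientation string `σ^i(Y^k)` = `(σ^i Y)^k`: the `i`-th shift of the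
`k`-fold concatenation of the string of the cycle `fY`. -/
def shiftPowStr {s : ℕ} (fY : ZMod s → Orient) (k : ℕ) (i : ZMod s) :
    Fin (k * s) → Orient :=
  fun j => fY (i + ((j : ℕ) : ZMod s))

/-- The orientation string `σ^i(Y)^k y_{i+1}` : the `i`-th shift of the `k`-fold
concatenation of the string of `fY`, extended by its own first letter. -/
def shiftPowExtStr {s : ℕ} (fY : ZMod s → Orient) (k : ℕ) (i : ZMod s) :
    Fin (k * s + 1) → Orient :=
  fun j => fY (i + ((j : ℕ) : ZMod s))

/-- Every vertex that moves from `φ` to `ψ`, moves up. -/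
def MovesUpOnly {m n : ℕ} (φ ψ : ZMod m → ZMod n) : Prop :=
  ∀ c, ψ c = φ c ∨ ψ c = φ c + 1

/-- Every vertex that moves from `φ` to `ψ`, moves down. -/
def MovesDownOnly {m n : ℕ} (φ ψ : ZMod m → ZMod n) : Prop :=
  ∀ c, ψ c = φ c ∨ ψ c = φ c - 1

/-- `φψ` is an up edge of the Hom-graph. -/
def UpEdge {m n : ℕ} (rC : ZMod m → ZMod m → Prop) (rD : ZMod n → ZMod n → Prop)
    (φ ψ : ZMod m → ZMod n) : Prop :=
  HomEdge rC rD φ ψ ∧ MovesUpOnly φ ψ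

/-- `φ` and `ψ` are joined by a path (walk) inside the induced subgraph on `S`. -/
def ConnIn {m n : ℕ} (rC : ZMod m → ZMod m → Prop) (rD : ZMod n → ZMod n → Prop)
    (S : Set (ZMod m → ZMod n)) (φ ψ : ZMod m → ZMod n) : Prop :=
  Relation.ReflTransGen (fun a b => a ∈ S ∧ b ∈ S ∧ HomEdge rC rD a b) φ ψ

/-- `ψ` is reachable from `φ` by a path of up edges inside `S`. -/
def UpReachIn {m n : ℕ} (rC : ZMod m → ZMod m → Prop) (rD : ZMod n → ZMod n → Prop)
    (S : Set (ZMod m → ZMod n)) (φ ψ : ZMod m → ZMod n) : Prop :=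
  Relation.ReflTransGen (fun a b => a ∈ S ∧ b ∈ S ∧ UpEdge rC rD a b) φ ψ

/-- One step of a path of up edges between homomorphisms. -/
def UpStep {m n : ℕ} (rC : ZMod m → ZMod m → Prop) (rD : ZMod n → ZMod n → Prop)
    (φ ψ : ZMod m → ZMod n) : Prop :=
  IsHom rC rD φ ∧ IsHom rC rD ψ ∧ UpEdge rC rD φ ψ

/-- The set of vertices on which `φ` and `φ'` differ. -/
def Neq {α β : Type*} (φ φ' : α → β) : Set α := {g | φ g ≠ φ' g}

/-- The map `φ_T`, agreeing with `φ'` on `T` and with `φ` elsewhere. -/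
noncomputable def refineMap {α β : Type*} (φ φ' : α → β) (T : Set α) : α → β :=
  fun g => if g ∈ T then φ' g else φ g

/-- The edge `φφ'` is non-refinable: no nonempty proper subset `T` of `Neq φ φ'`
yields a homomorphism `φ_T`. -/
def NonRefinable {α β : Type*} (rG : α → α → Prop) (rH : β → β → Prop)
    (φ φ' : α → β) : Prop :=
  ¬ ∃ T : Set α, T.Nonempty ∧ T ⊂ Neq φ φ' ∧ IsHom rG rH (refineMap φ φ' T)

/-- `T` is a strong component of the digraph `r`. -/
def IsStrongComponent {α : Type*} (r : α → α → Prop) (T : Set α) : Prop :=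
  T.Nonempty ∧ (∀ u ∈ T, ∀ v ∈ T, Relation.ReflTransGen r u v) ∧
    ∀ T' : Set α, T ⊆ T' → (∀ u ∈ T', ∀ v ∈ T', Relation.ReflTransGen r u v) → T' = T

/-- `T` has no arcs out to vertices not in `T`. -/
def IsTerminal {α : Type*} (r : α → α → Prop) (T : Set α) : Prop :=
  ∀ u ∈ T, ∀ v, r u v → v ∈ T

/-- `Mon_1(C,D;i)`: monotone wind-1 homomorphisms `φ` with `φ c₀ = i`. -/
def Mon1 {m n : ℕ} (fC : ZMod m → Orient) (fD : ZMod n → Orient) (i : ZMod n) :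
    Set (ZMod m → ZMod n) :=
  {φ | IsHom (cycRel fC) (cycRel fD) φ ∧ MonMap φ ∧ increase φ = (n : ℤ) ∧ φ 0 = i}

/-- A one-step up edge: an edge from `φ` obtained by moving all the vertices of a
subpath of `C` mapped to a single vertex `d` up to `d + 1`. -/
def OneStepUp {m n : ℕ} (rC : ZMod m → ZMod m → Prop) (rD : ZMod n → ZMod n → Prop)
    (φ φ' : ZMod m → ZMod n) : Prop :=
  HomEdge rC rD φ φ' ∧
    ∃ (a : ZMod m) (k : ℕ) (d : ZMod n), k < m ∧
      (∀ j : ℕ, j ≤ k → φ (a + ((j : ℕ) : ZMod m)) = d) ∧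
      ∀ c, φ' c = if ∃ j : ℕ, j ≤ k ∧ c = a + ((j : ℕ) : ZMod m) then d + 1 else φ c

/-- The number of increasing edges of `φ` among the first `j` edges of `C`. -/
def incBefore {m n : ℕ} (φ : ZMod m → ZMod n) (j : ℕ) : ℕ :=
  ((Finset.range j).filter fun t =>
    φ (((t : ℕ) : ZMod m) + 1) = φ ((t : ℕ) : ZMod m) + 1).card

/-- One cutback-pushing step: `φ'` is obtained from `φ` by replacing the values of
`φ` on a cutback `c_a … c_{a+L}` by `φ a`. -/
def CutbackStep {m n : ℕ} (φ φ' : ZMod m → ZMod n) : Prop :=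
  ∃ (a : ZMod m) (L : ℕ), L < m ∧ partialInc φ a L = 0 ∧
    (∀ j : ℕ, 0 < j → j < L → partialInc φ a j < 0) ∧
    ∀ c, φ' c = if ∃ j : ℕ, j ≤ L ∧ c = a + ((j : ℕ) : ZMod m) then φ a else φ c

/-- `Mon_1^+(C,D;i)`: wind-1 homomorphisms whose monotone push-up is in `Mon_1(C,D;i)`. -/
def Mon1Plus {m n : ℕ} (fC : ZMod m → Orient) (fD : ZMod n → Orient) (i : ZMod n) :
    Set (ZMod m → ZMod n) :=
  {φ | IsHom (cycRel fC) (cycRel fD) φ ∧ increase φ = (n : ℤ) ∧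
    ∃ ψ ∈ Mon1 fC fD i, Relation.ReflTransGen CutbackStep φ ψ}

/-!
Record the subpath `c_a … c_{a+L}` by its height profile `h j := φ(c_{a+j}) - φ(c_a)`, an integer
lattice path from `0` to `0` staying `≤ 0`. If its minimum `μ` is negative, the vertices at height
`μ` all sit at `φ(c_a) + μ` and every other neighbour of them sits one step higher, so moving all
of them up by one is a homomorphism joined to `φ` by an up edge (whichever way the edge of `D`
between the two values is oriented). This raises the minimum of the profile, and after finitely
many such moves the profile is `0` and the subpath is flattened to `φ(c_a)`.
-/

section PiecewiseConst

variable {α β : Type*} {rG : α → α → Prop} {rH : β → β → Prop} {φ : α → β} {S : Set α}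
  {x y : β}

theorem IsHom.piecewise_const (hrefl : ∀ b, rH b b) (hφ : IsHom rG rH φ)
    (hnb : ∀ u ∈ S, ∀ v ∉ S, rG u v ∨ rG v u → φ v = y) :
    IsHom rG rH (S.piecewise (fun _ => y) φ) := by
  intro u v huv
  by_cases hu : u ∈ S <;> by_cases hv : v ∈ S <;>
    simp only [Set.piecewise_eq_of_mem, Set.piecewise_eq_of_notMem, hu, hv, not_false_eq_true]
  · exact hrefl y
  · rw [hnb u hu v hv (Or.inl huv)]; exact hrefl y
  · rw [hnb v hv u hu (Or.inr huv)]; exact hrefl y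
  · exact hφ u v huv

theorem IsHom.homEdge_piecewise_const (hrefl : ∀ b, rH b b) (hφ : IsHom rG rH φ)
    (hS : ∀ u ∈ S, φ u = x) (hnb : ∀ u ∈ S, ∀ v ∉ S, rG u v ∨ rG v u → φ v = y)
    (hxy : rH x y ∨ rH y x) :
    HomEdge rG rH φ (S.piecewise (fun _ => y) φ) := by
  rcases hxy with hxy | hyx
  · left
    intro u v huv
    by_cases hv : v ∈ S
    · rw [Set.piecewise_eq_of_mem _ _ _ hv]
      by_cases hu : u ∈ S
      · rwa [hS u hu]
      · rw [hnb v hv u hu (Or.inr huv)]; exact hrefl y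
    · rw [Set.piecewise_eq_of_notMem _ _ _ hv]; exact hφ u v huv
  · right
    intro u v huv
    by_cases hu : u ∈ S
    · rw [Set.piecewise_eq_of_mem _ _ _ hu]
      by_cases hv : v ∈ S
      · rwa [hS v hv]
      · rw [hnb u hu v hv (Or.inl huv)]; exact hrefl y
    · rw [Set.piecewise_eq_of_notMem _ _ _ hu]; exact hφ u v huv

end PiecewiseConst

section Cycle

variable {m n : ℕ} {fC : ZMod m → Orient} {fD : ZMod n → Orient} {φ : ZMod m → ZMod n}

theorem cycRel_refl (f : ZMod m → Orient) (u : ZMod m) : cycRel f u u := Or.inl rfl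

theorem cycRel_add_one_or (f : ZMod m → Orient) (u : ZMod m) :
    cycRel f u (u + 1) ∨ cycRel f (u + 1) u := by
  cases h : f u <;> simp [cycRel, Orient.fwd, Orient.bwd, h]

theorem cycRel.eq_or_add_one_eq {f : ZMod m → Orient} {u v : ZMod m} (h : cycRel f u v) :
    u = v ∨ u + 1 = v ∨ v + 1 = u := by
  rcases h with h | ⟨h, -⟩ | ⟨h, -⟩
  exacts [Or.inl h, Or.inr (Or.inl h.symm), Or.inr (Or.inr h.symm)]

theorem IsHom.upStep_piecewise_add_one (hφ : IsHom (cycRel fC) (cycRel fD) φ)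
    {S : Set (ZMod m)} {x : ZMod n} (hS : ∀ u ∈ S, φ u = x)
    (hnb : ∀ u ∈ S, ∀ v ∉ S, u + 1 = v ∨ v + 1 = u → φ v = x + 1) :
    UpStep (cycRel fC) (cycRel fD) φ (S.piecewise (fun _ => x + 1) φ) := by
  have hnb' : ∀ u ∈ S, ∀ v ∉ S, cycRel fC u v ∨ cycRel fC v u → φ v = x + 1 := by
    intro u hu v hv huv
    refine hnb u hu v hv ?_
    rcases huv with h | h <;> rcases h.eq_or_add_one_eq with rfl | h | h
    all_goals first | exact absurd hu hv | tauto
  refine ⟨hφ, hφ.piecewise_const (cycRel_refl fD) hnb',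
    ⟨hφ.homEdge_piecewise_const (cycRel_refl fD) hS hnb' (cycRel_add_one_or fD x), ?_⟩⟩
  intro c
  by_cases hc : c ∈ S
  · right; rw [Set.piecewise_eq_of_mem _ _ _ hc, hS c hc]
  · left; exact Set.piecewise_eq_of_notMem _ _ _ hc

theorem abs_edgeVal_le (φ : ZMod m → ZMod n) (c : ZMod m) : |edgeVal φ c| ≤ 1 := by
  unfold edgeVal; split_ifs <;> norm_num

/-- Checking `+1` before `-1` in `edgeVal` is harmless: when `φ (c + 1)` is both, either
value of `edgeVal` gives it. -/
theorem IsHom.apply_add_one (hφ : IsHom (cycRel fC) (cycRel fD) φ) (c : ZMod m) :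
    φ (c + 1) = φ c + edgeVal φ c := by
  have hnear : φ c = φ (c + 1) ∨ φ c + 1 = φ (c + 1) ∨ φ (c + 1) + 1 = φ c := by
    rcases cycRel_add_one_or fC c with h | h
    · exact (hφ _ _ h).eq_or_add_one_eq
    · rcases (hφ _ _ h).eq_or_add_one_eq with h' | h' | h'
      exacts [Or.inl h'.symm, Or.inr (Or.inr h'), Or.inr (Or.inl h')]
  unfold edgeVal
  split_ifs with h₁ h₂
  · simpa using h₁
  · rw [h₂]; push_cast; ring
  · rcases hnear with h | h | h
    · simp [h]
    · exact absurd h.symm h₁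
    · exact absurd (eq_sub_of_add_eq h) h₂

theorem IsHom.apply_add_natCast (hφ : IsHom (cycRel fC) (cycRel fD) φ) (a : ZMod m) (j : ℕ) :
    φ (a + j) = φ a + partialInc φ a j := by
  induction j with
  | zero => simp [partialInc]
  | succ j ih =>
    rw [Nat.cast_succ, ← add_assoc, hφ.apply_add_one, ih]
    simp only [partialInc, Finset.sum_range_succ]
    push_cast
    ring

theorem add_natCast_inj {a : ZMod m} {i j : ℕ} (hi : i < m) (hj : j < m) :
    a + (i : ZMod m) = a + j ↔ i = j := by
  rw [add_right_inj, ZMod.natCast_eq_natCast_iff', Nat.mod_eq_of_lt hi, Nat.mod_eq_of_lt hj]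

noncomputable def flattenPath (φ : ZMod m → ZMod n) (a : ZMod m) (L : ℕ) : ZMod m → ZMod n :=
  fun c => if ∃ j : ℕ, j ≤ L ∧ c = a + ((j : ℕ) : ZMod m) then φ a else φ c

structure IsCutbackProfile (φ : ZMod m → ZMod n) (a : ZMod m) (L : ℕ) (h : ℕ → ℤ) : Prop where
  zero : h 0 = 0
  last : h L = 0
  nonpos : ∀ j ≤ L, h j ≤ 0
  step : ∀ j < L, |h (j + 1) - h j| ≤ 1
  apply_eq : ∀ j ≤ L, φ (a + j) = φ a + h j

theorem IsCutbackProfile.of_partialInc (hφ : IsHom (cycRel fC) (cycRel fD) φ) {a : ZMod m}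
    {L : ℕ} (hcut0 : partialInc φ a L = 0)
    (hcutneg : ∀ j : ℕ, 0 < j → j < L → partialInc φ a j < 0) :
    IsCutbackProfile φ a L (partialInc φ a) where
  zero := by simp [partialInc]
  last := hcut0
  nonpos j hj := by
    rcases Nat.eq_zero_or_pos j with rfl | hj0
    · simp [partialInc]
    · rcases hj.lt_or_eq with hjL | rfl
      exacts [(hcutneg j hj0 hjL).le, hcut0.le]
  step j _ := by
    rw [partialInc, partialInc, Finset.sum_range_succ, add_sub_cancel_left]
    exact abs_edgeVal_le φ _
  apply_eq j _ := hφ.apply_add_natCast a j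

def levelSet (a : ZMod m) (L : ℕ) (h : ℕ → ℤ) (μ : ℤ) : Set (ZMod m) :=
  {c | ∃ j ≤ L, h j = μ ∧ c = a + j}

noncomputable def liftLevel (φ : ZMod m → ZMod n) (a : ZMod m) (L : ℕ) (h : ℕ → ℤ) (μ : ℤ) :
    ZMod m → ZMod n :=
  (levelSet a L h μ).piecewise (fun _ => φ a + μ + 1) φ

namespace IsCutbackProfile

variable {a : ZMod m} {L : ℕ} {h : ℕ → ℤ}

theorem neg_le (hp : IsCutbackProfile φ a L h) : ∀ j ≤ L, -(j : ℤ) ≤ h j := by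
  intro j
  induction j with
  | zero => simp [hp.zero]
  | succ j ih =>
    intro hj
    have := abs_le.mp (hp.step j hj)
    push_cast
    linarith [ih (by omega)]

theorem flattenPath_eq_self (hp : IsCutbackProfile φ a L h) (hzero : ∀ j ≤ L, 0 ≤ h j) :
    flattenPath φ a L = φ := by
  funext c
  unfold flattenPath
  split_ifs with hc
  · obtain ⟨j, hj, rfl⟩ := hc
    rw [hp.apply_eq j hj, le_antisymm (hp.nonpos j hj) (hzero j hj)]
    simp
  · rfl

theorem add_natCast_mem_levelSet (hL : L < m) {μ : ℤ} {j : ℕ} (hj : j ≤ L) :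
    a + (j : ZMod m) ∈ levelSet a L h μ ↔ h j = μ := by
  constructor
  · rintro ⟨i, hi, hiμ, hji⟩
    rwa [(add_natCast_inj (by omega) (by omega)).mp hji]
  · exact fun hjμ => ⟨j, hj, hjμ, rfl⟩

theorem apply_eq_of_mem_levelSet (hp : IsCutbackProfile φ a L h) {μ : ℤ} {u : ZMod m}
    (hu : u ∈ levelSet a L h μ) : φ u = φ a + μ := by
  obtain ⟨j, hj, hjμ, rfl⟩ := hu
  rw [hp.apply_eq j hj, hjμ]

theorem apply_eq_of_adj_levelSet (hL : L < m) (hp : IsCutbackProfile φ a L h) {μ : ℤ}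
    (hμ : μ < 0) (hμle : ∀ j ≤ L, μ ≤ h j) {u v : ZMod m} (hu : u ∈ levelSet a L h μ)
    (hv : v ∉ levelSet a L h μ) (huv : u + 1 = v ∨ v + 1 = u) : φ v = φ a + μ + 1 := by
  have hnext : ∀ i ≤ L, a + (i : ZMod m) ∉ levelSet a L h μ → h i ≤ μ + 1 →
      φ (a + i) = φ a + μ + 1 := by
    intro i hi hiS hile
    have hiμ : h i = μ + 1 := by
      have := hμle i hi
      have := (add_natCast_mem_levelSet hL hi).not.mp hiS
      omega
    rw [hp.apply_eq i hi, hiμ]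
    push_cast
    ring
  obtain ⟨j, hj, hjμ, rfl⟩ := hu
  have hj0 : j ≠ 0 := by rintro rfl; rw [hp.zero] at hjμ; omega
  have hjL : j ≠ L := by rintro rfl; rw [hp.last] at hjμ; omega
  rcases huv with rfl | hvj
  · have := abs_le.mp (hp.step j (by omega))
    have hcast : a + (j : ZMod m) + 1 = a + ((j + 1 : ℕ) : ZMod m) := by push_cast; ring
    rw [hcast] at hv ⊢
    exact hnext (j + 1) (by omega) hv (by omega)
  · obtain ⟨k, rfl⟩ : ∃ k, j = k + 1 := ⟨j - 1, by omega⟩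
    have := abs_le.mp (hp.step k (by omega))
    obtain rfl : v = a + k := by
      push_cast at hvj
      rw [← add_assoc] at hvj
      exact add_right_cancel hvj
    exact hnext k (by omega) hv (by omega)

theorem notMem_levelSet_self (hL : L < m) (hp : IsCutbackProfile φ a L h) {μ : ℤ}
    (hμ : μ < 0) : a ∉ levelSet a L h μ := by
  have := add_natCast_mem_levelSet (a := a) (h := h) (μ := μ) hL (Nat.zero_le L)
  rw [Nat.cast_zero, add_zero, hp.zero] at this
  exact this.not.mpr hμ.ne'

theorem upStep_liftLevel (hφ : IsHom (cycRel fC) (cycRel fD) φ) (hL : L < m)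
    (hp : IsCutbackProfile φ a L h) {μ : ℤ} (hμ : μ < 0) (hμle : ∀ j ≤ L, μ ≤ h j) :
    UpStep (cycRel fC) (cycRel fD) φ (liftLevel φ a L h μ) :=
  hφ.upStep_piecewise_add_one (fun _ hu => hp.apply_eq_of_mem_levelSet hu)
    fun _ hu _ hv huv => hp.apply_eq_of_adj_levelSet hL hμ hμle hu hv huv

theorem flattenPath_liftLevel (hL : L < m) (hp : IsCutbackProfile φ a L h) {μ : ℤ}
    (hμ : μ < 0) : flattenPath (liftLevel φ a L h μ) a L = flattenPath φ a L := by
  have hψa : liftLevel φ a L h μ a = φ a :=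
    Set.piecewise_eq_of_notMem _ _ _ (hp.notMem_levelSet_self hL hμ)
  funext c
  unfold flattenPath
  split_ifs with hc
  · exact hψa
  · refine Set.piecewise_eq_of_notMem _ _ _ ?_
    rintro ⟨j, hj, -, rfl⟩
    exact hc ⟨j, hj, rfl⟩

theorem liftLevel_profile (hL : L < m) (hp : IsCutbackProfile φ a L h) {μ : ℤ} (hμ : μ < 0)
    (hμle : ∀ j ≤ L, μ ≤ h j) :
    IsCutbackProfile (liftLevel φ a L h μ) a L (fun j => if h j = μ then μ + 1 else h j) where
  zero := by simp [hp.zero, hμ.ne']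
  last := by simp [hp.last, hμ.ne']
  nonpos j hj := by
    have := hp.nonpos j hj
    split_ifs <;> omega
  step j hj := by
    have := abs_le.mp (hp.step j hj)
    have := hμle j hj.le
    have := hμle (j + 1) hj
    rw [abs_le]
    split_ifs <;> constructor <;> omega
  apply_eq j hj := by
    have hmem := add_natCast_mem_levelSet (a := a) (h := h) (μ := μ) hL hj
    rw [show liftLevel φ a L h μ a = φ a from
      Set.piecewise_eq_of_notMem _ _ _ (hp.notMem_levelSet_self hL hμ)]
    split_ifs with hjμ
    · refine (Set.piecewise_eq_of_mem _ _ _ (hmem.mpr hjμ)).trans ?_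
      push_cast
      ring
    · exact (Set.piecewise_eq_of_notMem _ _ _ (mt hmem.mp hjμ)).trans (hp.apply_eq j hj)

theorem reflTransGen_upStep_flattenPath (hφ : IsHom (cycRel fC) (cycRel fD) φ) (hL : L < m)
    (hp : IsCutbackProfile φ a L h) :
    Relation.ReflTransGen (UpStep (cycRel fC) (cycRel fD)) φ (flattenPath φ a L) := by
  obtain ⟨N, hN⟩ : ∃ N : ℕ, ∀ j ≤ L, -(N : ℤ) ≤ h j :=
    ⟨L, fun j hj => (neg_le_neg (by exact_mod_cast hj)).trans (hp.neg_le j hj)⟩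
  induction N generalizing φ h with
  | zero =>
    rw [hp.flattenPath_eq_self (by simpa using hN)]
  | succ N ih =>
    have hμ : -((N : ℤ) + 1) < 0 := by omega
    have hμle : ∀ j ≤ L, -((N : ℤ) + 1) ≤ h j := by simpa using hN
    have hstep := upStep_liftLevel hφ hL hp hμ hμle
    rw [← flattenPath_liftLevel hL hp hμ]
    refine .head hstep (ih hstep.2.1 (liftLevel_profile hL hp hμ hμle) fun j hj => ?_)
    have := hμle j hj
    split_ifs <;> omega

end IsCutbackProfile

end Cycle

theorem cutback_push_up_general (m n : ℕ)
    (fC : ZMod m → Orient) (fD : ZMod n → Orient)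
    (φ : ZMod m → ZMod n) (hφ : IsHom (cycRel fC) (cycRel fD) φ)
    (a : ZMod m) (L : ℕ) (hL : L < m)
    (hcut0 : partialInc φ a L = 0)
    (hcutneg : ∀ j : ℕ, 0 < j → j < L → partialInc φ a j < 0)
    (φ' : ZMod m → ZMod n)
    (hφ'def : ∀ c, φ' c =
      if ∃ j : ℕ, j ≤ L ∧ c = a + ((j : ℕ) : ZMod m) then φ a else φ c) :
    Relation.ReflTransGen (UpStep (cycRel fC) (cycRel fD)) φ φ' := by
  obtain rfl : φ' = flattenPath φ a L := funext hφ'def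
  exact (IsCutbackProfile.of_partialInc hφ hcut0 hcutneg).reflTransGen_upStep_flattenPath hφ hL

/-- from any `φ ∈ Hom(C,D)` and any cutback `c_a … c_{a+L}` of `C` under
`φ`, there is a path of up edges from `φ` to the homomorphism `φ'` obtained from `φ`
by setting `φ'` equal to `φ a` on the cutback. -/
theorem cutback_push_up (m n : ℕ) (hm : 3 ≤ m)
    (fC : ZMod m → Orient) (fD : ZMod n → Orient) (hD : NonContractible fD)
    (φ : ZMod m → ZMod n) (hφ : IsHom (cycRel fC) (cycRel fD) φ)
    (a : ZMod m) (L : ℕ) (hL : L < m)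
    (hcut0 : partialInc φ a L = 0)
    (hcutneg : ∀ j : ℕ, 0 < j → j < L → partialInc φ a j < 0)
    (φ' : ZMod m → ZMod n)
    (hφ'def : ∀ c, φ' c =
      if ∃ j : ℕ, j ≤ L ∧ c = a + ((j : ℕ) : ZMod m) then φ a else φ c) :
    Relation.ReflTransGen (UpStep (cycRel fC) (cycRel fD)) φ φ' :=
  cutback_push_up_general m n fC fD φ hφ a L hL hcut0 hcutneg φ' hφ'def

end Recon
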